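/- arXiv:1406.2714 — 5 statements merged into one kernel-verified Lean document; each statement's English description precedes it below -/
import Mathlib

section
/- If a k-uniform hypergraph is semicycle-free, then the number of its edges is at most C(n, k-1), where n is the number of vertices. -/
variable {V : Type*} [DecidableEq V]

/-- The list of consecutive `k`-windows (as finsets) of a vertex sequence. -/
def windows (k : ℕ) (w : List V) : List (Finset V) :=
  (List.range (w.length + 1 - k)).map fun i => ((w.drop i).take k).toFinset

/-- `w` is the vertex sequence of a chain: `v₁ ≠ v_l`, each window is a `k`-set,
and the `l - k + 1` window edges are pairwise distinct. -/
def IsChainSeq (k : ℕ) (w : List V) : Prop :=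
  k ≤ w.length ∧ w.head? ≠ w.getLast? ∧
  (∀ e ∈ windows k w, e.card = k) ∧ (windows k w).Nodup

/-- `w` is the vertex sequence of a semicycle: `v₁ = v_l`, each window is a `k`-set,
and the `l - k + 1` window edges are pairwise distinct. -/
def IsSemicycleSeq (k : ℕ) (w : List V) : Prop :=
  k ≤ w.length ∧ w.head? = w.getLast? ∧
  (∀ e ∈ windows k w, e.card = k) ∧ (windows k w).Nodup

/-- A hypergraph with edge set `E` contains no semicycle as a subhypergraph. -/
def SemicycleFree (k : ℕ) (E : Finset (Finset V)) : Prop :=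
  ¬ ∃ w : List V, IsSemicycleSeq k w ∧ ∀ e ∈ windows k w, e ∈ E

/-- Every two distinct vertices of `S` lie in a common chain subhypergraph of `E`. -/
def ChainConnOn (k : ℕ) (S : Finset V) (E : Finset (Finset V)) : Prop :=
  ∀ u ∈ S, ∀ v ∈ S, u ≠ v →
    ∃ w : List V, IsChainSeq k w ∧ (∀ e ∈ windows k w, e ∈ E) ∧ u ∈ w ∧ v ∈ w

/-- Chain-connectedness on the whole (finite) vertex type. -/
def ChainConn [Fintype V] (k : ℕ) (E : Finset (Finset V)) : Prop :=
  ChainConnOn k Finset.univ E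

/-- A `k`-uniform hypertree: chain-connected and semicycle-free. -/
def IsHypertree [Fintype V] (k : ℕ) (E : Finset (Finset V)) : Prop :=
  (∀ e ∈ E, e.card = k) ∧ ChainConn k E ∧ SemicycleFree k E

/-- Every chain subhypergraph of `E` has length (number of edges) at most `l`. -/
def ChainsLenLE (k l : ℕ) (E : Finset (Finset V)) : Prop :=
  ∀ w : List V, IsChainSeq k w → (∀ e ∈ windows k w, e ∈ E) →
    w.length + 1 - k ≤ l

/-- An `l`-hypertree: a hypertree all of whose chains have length at most `l`. -/
def IsLHypertree [Fintype V] (k l : ℕ) (E : Finset (Finset V)) : Prop :=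
  IsHypertree k E ∧ ChainsLenLE k l E

/-- Edge-minimal: deleting any edge destroys chain-connectedness. -/
def EdgeMinimal [Fintype V] (k : ℕ) (E : Finset (Finset V)) : Prop :=
  ∀ e ∈ E, ¬ ChainConn k (E.erase e)

/-- Edge-maximal: adding any new `k`-set as an edge creates a semicycle. -/
def EdgeMaximal [Fintype V] (k : ℕ) (E : Finset (Finset V)) : Prop :=
  ∀ s : Finset V, s.card = k → s ∉ E → ¬ SemicycleFree k (insert s E)

/-- `S` is a (tight) star subhypergraph of `E`: a nonempty set of edges of `E`
all containing a common `(k-1)`-set kernel. -/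
def IsStarSub (k : ℕ) (E S : Finset (Finset V)) : Prop :=
  S ⊆ E ∧ S.Nonempty ∧ ∃ K : Finset V, K.card = k - 1 ∧ ∀ e ∈ S, K ⊆ e

/-- `S` is a maximal star subhypergraph of `E`. -/
def IsMaxStar (k : ℕ) (E S : Finset (Finset V)) : Prop :=
  IsStarSub k E S ∧ ∀ T, IsStarSub k E T → S ⊆ T → S = T

/-!
A semicycle-free `k`-uniform hypergraph `E` has a leaf: an edge `e` and a `(k-1)`-set `K ⊆ e`
contained in no other edge. Take a longest chain `w` in `E`. Its vertices are distinct: a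
repetition `w[a] = w[b]` with `b - a ≥ k - 1` closes the semicycle `w[a], …, w[b]`, and a closer
one lies inside a single window, which is a `k`-set. Let `K` be the set of the last `k - 1`
vertices. An edge through `K` other than the last window is either an earlier window, which would
contain the last vertex a second time, or it extends `w` to a longer chain (or to a semicycle).
Removing leaves one by one charges each edge to its own member of the shadow `∂ E`, a family of
`(k-1)`-sets, so `#E ≤ #∂E ≤ C(n, k-1)`.
-/

open Finset FinsetFamily

section Windows

variable {k : ℕ} {w : List V}

theorem length_windows : (windows k w).length = w.length + 1 - k := by
  simp [windows]

theorem getElem_windows {i : ℕ} (hi : i < (windows k w).length) :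
    (windows k w)[i] = ((w.drop i).take k).toFinset := by
  simp [windows]

theorem mem_windows {e : Finset V} :
    e ∈ windows k w ↔ ∃ i < w.length + 1 - k, ((w.drop i).take k).toFinset = e := by
  simp [windows]

theorem windows_drop {t : ℕ} (ht : t ≤ w.length) :
    windows k (w.drop t) = (windows k w).drop t := by
  apply List.ext_getElem
  · simp only [length_windows, List.length_drop]; omega
  · intro i _ _
    simp only [getElem_windows, List.getElem_drop, List.drop_drop]

theorem windows_take {t : ℕ} (ht : t ≤ w.length) :
    windows k (w.take t) = (windows k w).take (t + 1 - k) := by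
  apply List.ext_getElem
  · simp only [length_windows, List.length_take]; omega
  · intro i hi _
    simp only [length_windows, List.length_take] at hi
    rw [getElem_windows, List.getElem_take, getElem_windows, List.drop_take, List.take_take,
      min_eq_left (by omega)]

theorem windows_append_singleton (hk : 1 ≤ k) (hkw : k ≤ w.length) (x : V) :
    windows k (w ++ [x]) = windows k w ++ [insert x (w.drop (w.length + 1 - k)).toFinset] := by
  apply List.ext_getElem
  · simp only [length_windows, List.length_append, List.length_singleton]; omega
  · intro i hi _
    simp only [length_windows, List.length_append, List.length_singleton] at hi
    rw [getElem_windows, List.drop_append_of_le_length (by omega)]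
    rcases Nat.lt_or_ge i (w.length + 1 - k) with hi' | hi'
    · rw [List.take_append_of_le_length (by rw [List.length_drop]; omega),
        List.getElem_append_left (by rw [length_windows]; omega), getElem_windows]
    · have hlen : (w.drop i ++ [x]).length ≤ k := by
        rw [List.length_append, List.length_drop, List.length_singleton]; omega
      rw [List.take_of_length_le hlen, List.getElem_append_right (by rw [length_windows]; omega)]
      simp [length_windows, show i = w.length + 1 - k by omega]

theorem windows_toList {s : Finset V} (hs : s.card = k) : windows k s.toList = [s] := by
  subst hs
  simp [windows, List.take_of_length_le]

theorem getElem_ne_getElem_of_lt_add (hcard : ∀ e ∈ windows k w, e.card = k)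
    (hkw : k ≤ w.length) {a b : ℕ} (hab : a < b) (hba : b < a + k) (hb : b < w.length) :
    w[a] ≠ w[b] := by
  set s := min a (w.length - k)
  set l := (w.drop s).take k
  have hl : l.length = k := by simp only [l, List.length_take, List.length_drop]; omega
  have hnodup : l.Nodup := by
    refine (Multiset.toFinset_card_eq_card_iff_nodup (m := (l : Multiset V))).1 ?_
    rw [Multiset.coe_card, hl]
    exact hcard _ (mem_windows.2 ⟨s, by omega, rfl⟩)
  have hget : ∀ c (hc : s ≤ c) (hcs : c < s + k), l[c - s]'(by omega) = w[c]'(by omega) := by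
    intro c hc hcs
    simp only [l, List.getElem_take, List.getElem_drop]
    congr 1; omega
  rw [← hget a (by omega) (by omega), ← hget b (by omega) (by omega), Ne,
    hnodup.getElem_inj_iff]
  omega

end Windows

section Semicycle

variable {k : ℕ} {E : Finset (Finset V)}

theorem SemicycleFree.mono {E' : Finset (Finset V)} (hsf : SemicycleFree k E) (h : E' ⊆ E) :
    SemicycleFree k E' :=
  fun ⟨w, hw, hwE⟩ => hsf ⟨w, hw, fun e he => h (hwE e he)⟩

theorem SemicycleFree.isChainSeq {w : List V} (hsf : SemicycleFree k E) (hkw : k ≤ w.length)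
    (hcard : ∀ e ∈ windows k w, e.card = k) (hnd : (windows k w).Nodup)
    (hwE : ∀ e ∈ windows k w, e ∈ E) : IsChainSeq k w :=
  ⟨hkw, fun h => hsf ⟨w, ⟨hkw, h, hcard, hnd⟩, hwE⟩, hcard, hnd⟩

theorem SemicycleFree.isChainSeq_toList {e : Finset V} (hsf : SemicycleFree k E) (he : e ∈ E)
    (hek : e.card = k) : IsChainSeq k e.toList := by
  refine hsf.isChainSeq (by simp [hek]) ?_ ?_ ?_ <;> simp [windows_toList hek, hek, he]

theorem SemicycleFree.two_le {e : Finset V} (hsf : SemicycleFree k E) (he : e ∈ E)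
    (hek : e.card = k) : 2 ≤ k := by
  have hchain := hsf.isChainSeq_toList he hek
  by_contra! hk
  rw [← hek, ← length_toList] at hk
  rcases h : e.toList with _ | ⟨a, _ | ⟨b, l⟩⟩ <;> simp_all [IsChainSeq]

theorem SemicycleFree.nodup_of_isChainSeq {w : List V} (hsf : SemicycleFree k E)
    (hw : IsChainSeq k w) (hwE : ∀ e ∈ windows k w, e ∈ E) : w.Nodup := by
  obtain ⟨hkw, -, hcard, hnd⟩ := hw
  refine List.pairwise_iff_getElem.2 fun a b ha hb hab heq => ?_
  by_cases hfar : k ≤ b + 1 - a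
  · set u := (w.take (b + 1)).drop a
    have hsub : (windows k u).Sublist (windows k w) := by
      rw [windows_drop (by rw [List.length_take]; omega), windows_take (by omega)]
      exact (List.drop_sublist _ _).trans (List.take_sublist _ _)
    have hku : k ≤ u.length := by simp only [u, List.length_drop, List.length_take]; omega
    refine hsf ⟨u, ⟨hku, ?_, fun e he => hcard e (hsub.subset he), hnd.sublist hsub⟩,
      fun e he => hwE e (hsub.subset he)⟩
    simp [u, List.getLast?_drop, List.getLast?_take, List.getElem?_take, ha, hb, heq,
      not_lt_of_gt hab]
  · exact getElem_ne_getElem_of_lt_add hcard hkw hab (by omega) hb heq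

theorem SemicycleFree.isChainSeq_append_singleton {w : List V} (hsf : SemicycleFree k E)
    (hu : ∀ e ∈ E, e.card = k) (hk : 1 ≤ k) (hw : IsChainSeq k w)
    (hwE : ∀ e ∈ windows k w, e ∈ E) {x : V}
    (hxE : insert x (w.drop (w.length + 1 - k)).toFinset ∈ E)
    (hxw : insert x (w.drop (w.length + 1 - k)).toFinset ∉ windows k w) :
    IsChainSeq k (w ++ [x]) ∧ ∀ e ∈ windows k (w ++ [x]), e ∈ E := by
  have hwE' : ∀ e ∈ windows k (w ++ [x]), e ∈ E := by
    simpa [windows_append_singleton hk hw.1, or_imp, forall_and, hxE] using hwE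
  have hkw : k ≤ (w ++ [x]).length := by
    rw [List.length_append, List.length_singleton]; exact hw.1.trans (Nat.le_succ _)
  refine ⟨hsf.isChainSeq hkw (fun e he => hu e (hwE' e he)) ?_ hwE', hwE'⟩
  rw [windows_append_singleton hk hw.1]
  exact List.concat_eq_append ▸ hw.2.2.2.concat hxw

theorem chainsLenLE_card (E : Finset (Finset V)) : ChainsLenLE k E.card E := by
  intro w hw hwE
  rw [← length_windows, ← List.toFinset_card_of_nodup hw.2.2.2]
  exact card_le_card fun e he => hwE e (List.mem_toFinset.1 he)

theorem exists_isChainSeq_maximal {w₀ : List V} (hw₀ : IsChainSeq k w₀)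
    (hw₀E : ∀ e ∈ windows k w₀, e ∈ E) :
    ∃ w, (IsChainSeq k w ∧ ∀ e ∈ windows k w, e ∈ E) ∧
      ∀ w', IsChainSeq k w' → (∀ e ∈ windows k w', e ∈ E) → w'.length ≤ w.length := by
  set S := {n | ∃ w, (IsChainSeq k w ∧ ∀ e ∈ windows k w, e ∈ E) ∧ w.length = n}
  have hbdd : BddAbove S := by
    refine ⟨E.card + k, ?_⟩
    rintro _ ⟨w, ⟨hw, hwE⟩, rfl⟩
    have := chainsLenLE_card E w hw hwE
    omega
  obtain ⟨w, hw, hlen⟩ := Nat.sSup_mem (s := S) ⟨_, w₀, ⟨hw₀, hw₀E⟩, rfl⟩ hbdd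
  exact ⟨w, hw, fun w' hw' hw'E => hlen ▸ le_csSup hbdd ⟨w', ⟨hw', hw'E⟩, rfl⟩⟩

theorem SemicycleFree.exists_leaf (hsf : SemicycleFree k E) (hu : ∀ e ∈ E, e.card = k)
    (hE : E.Nonempty) : ∃ e ∈ E, ∃ K ∈ ∂ E, ∀ e' ∈ E, K ⊆ e' → e' = e := by
  obtain ⟨e₀, he₀⟩ := hE
  have hk : 2 ≤ k := hsf.two_le he₀ (hu e₀ he₀)
  obtain ⟨w, ⟨hw, hwE⟩, hmax⟩ :=
    exists_isChainSeq_maximal (hsf.isChainSeq_toList he₀ (hu e₀ he₀))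
      (by simpa [windows_toList (hu e₀ he₀)] using he₀)
  have hnodup := hsf.nodup_of_isChainSeq hw hwE
  have hkw := hw.1
  set m := w.length
  set e := (w.drop (m - k)).toFinset
  set K := (w.drop (m + 1 - k)).toFinset
  have hew : e ∈ windows k w := by
    refine mem_windows.2 ⟨m - k, by omega, ?_⟩
    rw [List.take_of_length_le (by simp only [m, List.length_drop]; omega)]
  have hKe : K ⊆ e := fun x hx => List.mem_toFinset.2
    ((List.drop_sublist_drop_left w (by omega)).subset (List.mem_toFinset.1 hx))
  have hKcard : K.card = k - 1 := by
    rw [List.toFinset_card_of_nodup (hnodup.sublist (List.drop_sublist _ _)), List.length_drop]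
    omega
  have hlast : w[m - 1] ∈ K := List.mem_toFinset.2 (List.mem_iff_getElem.2
    ⟨k - 2, by rw [List.length_drop]; omega, by rw [List.getElem_drop]; congr 1; omega⟩)
  refine ⟨e, hwE e hew, K, mem_shadow_iff_exists_mem_card_add_one.2
    ⟨e, hwE e hew, hKe, by rw [hu e (hwE e hew), hKcard]; omega⟩, fun e' he' hKe' => ?_⟩
  by_contra hne
  by_cases he'w : e' ∈ windows k w
  · obtain ⟨i, hi, rfl⟩ := mem_windows.1 he'w
    have hi' : i < m - k := by
      refine lt_of_le_of_ne (by omega) fun h => hne ?_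
      rw [h, List.take_of_length_le (by rw [List.length_drop]; omega)]
    obtain ⟨j, hj, hji⟩ := List.mem_iff_getElem.1 (List.mem_toFinset.1 (hKe' hlast))
    simp only [List.length_take, List.length_drop, List.getElem_take, List.getElem_drop] at hj hji
    have := hnodup.getElem_inj_iff.1 hji
    omega
  · obtain ⟨x, -, rfl⟩ := exists_eq_insert_iff.2 ⟨hKe', by rw [hKcard, hu e' he']; omega⟩
    have hext := hsf.isChainSeq_append_singleton hu (by omega) hw hwE he' he'w
    have := hmax _ hext.1 hext.2
    rw [List.length_append, List.length_singleton] at this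
    exact Nat.not_succ_le_self _ this

theorem SemicycleFree.card_le_card_shadow (hsf : SemicycleFree k E)
    (hu : ∀ e ∈ E, e.card = k) : E.card ≤ (∂ E).card := by
  induction E using Finset.strongInduction with
  | H E ih =>
  rcases E.eq_empty_or_nonempty with rfl | hE
  · simp
  obtain ⟨e, he, K, hK, hleaf⟩ := hsf.exists_leaf hu hE
  have hK' : K ∉ ∂ (E.erase e) := by
    rw [mem_shadow_iff_exists_mem_card_add_one]
    rintro ⟨s, hs, hKs, -⟩
    exact ne_of_mem_erase hs (hleaf s (mem_of_mem_erase hs) hKs)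
  calc E.card = (E.erase e).card + 1 := (card_erase_add_one he).symm
    _ ≤ (∂ (E.erase e)).card + 1 := Nat.add_le_add_right (ih _ (erase_ssubset he)
        (hsf.mono (erase_subset e E)) fun s hs => hu s (mem_of_mem_erase hs)) 1
    _ = (insert K (∂ (E.erase e))).card := (card_insert_of_notMem hK').symm
    _ ≤ (∂ E).card := card_le_card (insert_subset hK (shadow_mono (erase_subset e E)))

end Semicycle

/-- a semicycle-free `k`-uniform hypergraph on `n` vertices has at
most `C(n, k-1)` edges. -/
theorem stmt1 {V : Type*} [Fintype V] [DecidableEq V] (n k : ℕ)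
    (hn : Fintype.card V = n)
    (E : Finset (Finset V)) (hu : ∀ e ∈ E, e.card = k)
    (hsf : SemicycleFree k E) : E.card ≤ n.choose (k - 1) :=
  hn ▸ (hsf.card_le_card_shadow hu).trans (Set.Sized.shadow hu).card_le
end

section
/- In a k-uniform 2-hypertree, any two distinct maximal tight stars are edge-disjoint. -/
/-!
Suppose distinct maximal stars `S₁`, `S₂` share an edge `e`. If their kernels agree, `S₁ ∪ S₂`
is a star, contradicting maximality. Otherwise the kernels are two different `(k-1)`-subsets
`K₁ = e - c` and `K₂ = e - b` of `e`, and edges `f = K₁ + a ∈ S₁ \ S₂`, `g = K₂ + d ∈ S₂ \ S₁`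
are, together with `e`, the three windows of the sequence `a, b, (K₁ ∩ K₂), c, d`. Depending
on whether `a = d`, this sequence is a semicycle or a chain of length 3; a 2-hypertree has
neither.
-/

variable {V : Type*} [DecidableEq V]

open Finset

lemma windows_cons_cons_append_pair (a b c d : V) (m : List V) :
    windows (m.length + 2) (a :: b :: m ++ [c, d]) =
      [insert a (insert b m.toFinset), insert b (insert c m.toFinset),
        insert c (insert d m.toFinset)] := by
  have hlen : (a :: b :: m ++ [c, d]).length + 1 - (m.length + 2) = 3 := by simp
  rw [windows, hlen, show List.range 3 = [0, 1, 2] from rfl]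
  simp only [List.map_cons, List.map_nil, List.cons.injEq, and_true]
  refine ⟨?_, ?_, ?_⟩
  · rw [List.drop_zero, List.cons_append, List.cons_append, List.take_succ_cons,
      List.take_succ_cons, List.take_left' rfl]
    simp
  · simp only [List.drop_one, List.cons_append, List.tail_cons, List.take_succ_cons]
    rw [List.take_append, List.take_of_length_le (by omega)]
    ext; simp
  · simp only [List.cons_append, List.drop_succ_cons, List.drop_zero]
    rw [List.take_append, List.take_of_length_le (by omega)]
    ext; simp

lemma Finset.exists_eq_insert_insert_of_ne {K₁ K₂ e : Finset V} (hK₁e : K₁ ⊆ e) (hK₂e : K₂ ⊆ e)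
    (hK₁ : #K₁ = #e - 1) (hK₂ : #K₂ = #e - 1) (hne : K₁ ≠ K₂) :
    ∃ b c M, K₁ = insert b M ∧ K₂ = insert c M ∧ e = insert b (insert c M) ∧ #M + 2 = #e := by
  have he : #e ≠ 0 := fun h => hne <| by
    rw [card_eq_zero.mp (by omega : #K₁ = 0), card_eq_zero.mp (by omega : #K₂ = 0)]
  obtain ⟨c, hcK₁, hc⟩ := exists_eq_insert_iff.mpr ⟨hK₁e, by omega⟩
  obtain ⟨b, hbK₂, hb⟩ := exists_eq_insert_iff.mpr ⟨hK₂e, by omega⟩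
  have hK₁_eq : K₁ = e.erase c := by rw [← hc, erase_insert hcK₁]
  have hK₂_eq : K₂ = e.erase b := by rw [← hb, erase_insert hbK₂]
  have hbc : b ≠ c := fun h => hne (by rw [hK₁_eq, hK₂_eq, h])
  have hbK₁ : b ∈ K₁ := by
    rw [hK₁_eq]; exact mem_erase.mpr ⟨hbc, hb ▸ mem_insert_self b K₂⟩
  refine ⟨b, c, K₁.erase b, (insert_erase hbK₁).symm, ?_, ?_, ?_⟩
  · rw [hK₂_eq, ← hc, erase_insert_of_ne hbc.symm]
  · rw [insert_comm, insert_erase hbK₁, hc]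
  · have := card_erase_add_one hbK₁; omega

lemma exists_windows_eq_of_ne_kernels {k : ℕ} {f e g K₁ K₂ : Finset V} (hf : #f = k)
    (he : #e = k) (hg : #g = k) (hK₁ : #K₁ = k - 1) (hK₂ : #K₂ = k - 1) (hK₁f : K₁ ⊆ f)
    (hK₁e : K₁ ⊆ e) (hK₂e : K₂ ⊆ e) (hK₂g : K₂ ⊆ g) (hK : K₁ ≠ K₂) :
    ∃ w : List V, w.length = k + 2 ∧ windows k w = [f, e, g] := by
  obtain ⟨b, c, M, rfl, rfl, rfl, hM⟩ :=
    exists_eq_insert_insert_of_ne hK₁e hK₂e (by omega) (by omega) hK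
  obtain ⟨a, -, rfl⟩ := exists_eq_insert_iff.mpr ⟨hK₁f, by omega⟩
  obtain ⟨d, -, rfl⟩ := exists_eq_insert_iff.mpr ⟨hK₂g, by omega⟩
  have hk : k = M.toList.length + 2 := by rw [length_toList]; omega
  refine ⟨a :: b :: M.toList ++ [c, d], by simp [hk], ?_⟩
  rw [hk, windows_cons_cons_append_pair, toList_toFinset, insert_comm d c]

lemma ChainsLenLE.length_add_one_sub_le_of_semicycleFree {k l : ℕ} {E : Finset (Finset V)}
    (hlen : ChainsLenLE k l E) (hfree : SemicycleFree k E) {w : List V} (hk : k ≤ w.length)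
    (hcard : ∀ e ∈ windows k w, #e = k) (hnd : (windows k w).Nodup)
    (hE : ∀ e ∈ windows k w, e ∈ E) : w.length + 1 - k ≤ l := by
  by_cases hends : w.head? = w.getLast?
  · exact absurd ⟨w, ⟨hk, hends, hcard, hnd⟩, hE⟩ hfree
  · exact hlen w ⟨hk, hends, hcard, hnd⟩ hE

lemma IsMaxStar.eq_of_common_kernel {k : ℕ} {E S₁ S₂ : Finset (Finset V)} {K : Finset V}
    (h₁ : IsMaxStar k E S₁) (h₂ : IsMaxStar k E S₂) (hK : #K = k - 1)
    (hK₁ : ∀ e ∈ S₁, K ⊆ e) (hK₂ : ∀ e ∈ S₂, K ⊆ e) : S₁ = S₂ := by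
  have hU : IsStarSub k E (S₁ ∪ S₂) :=
    ⟨union_subset h₁.1.1 h₂.1.1, h₁.1.2.1.mono subset_union_left, K, hK,
      fun e he => (mem_union.mp he).elim (hK₁ e) (hK₂ e)⟩
  exact (h₁.2 _ hU subset_union_left).trans (h₂.2 _ hU subset_union_right).symm

theorem stmt3_general {V : Type*} [Fintype V] [DecidableEq V] (k : ℕ)
    (E : Finset (Finset V)) (hH : IsLHypertree k 2 E)
    (S₁ S₂ : Finset (Finset V)) (h1 : IsMaxStar k E S₁) (h2 : IsMaxStar k E S₂)
    (hne : S₁ ≠ S₂) : Disjoint S₁ S₂ := by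
  obtain ⟨⟨hunif, -, hfree⟩, hlen⟩ := hH
  rw [disjoint_left]
  intro e he₁ he₂
  obtain ⟨hS₁E, -, K₁, hK₁, hK₁S⟩ := h1.1
  obtain ⟨hS₂E, -, K₂, hK₂, hK₂S⟩ := h2.1
  obtain rfl | hK := eq_or_ne K₁ K₂
  · exact hne (h1.eq_of_common_kernel h2 hK₁ hK₁S hK₂S)
  obtain ⟨f, hf₁, hf₂⟩ := not_subset.mp fun h => hne (h1.2 S₂ h2.1 h)
  obtain ⟨g, hg₂, hg₁⟩ := not_subset.mp fun h => hne (h2.2 S₁ h1.1 h).symm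
  obtain ⟨w, hw, hwin⟩ := exists_windows_eq_of_ne_kernels (hunif f (hS₁E hf₁))
    (hunif e (hS₁E he₁)) (hunif g (hS₂E hg₂)) hK₁ hK₂ (hK₁S f hf₁) (hK₁S e he₁)
    (hK₂S e he₂) (hK₂S g hg₂) hK
  have hE : ∀ s ∈ windows k w, s ∈ E := by simp [hwin, hS₁E hf₁, hS₁E he₁, hS₂E hg₂]
  have hfe : f ≠ e := fun h => hf₂ (h ▸ he₂)
  have hfg : f ≠ g := fun h => hf₂ (h ▸ hg₂)
  have heg : e ≠ g := fun h => hg₁ (h ▸ he₁)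
  have hnd : (windows k w).Nodup := by simp [hwin, hfe, hfg, heg]
  have := hlen.length_add_one_sub_le_of_semicycleFree hfree (by omega)
    (fun s hs => hunif s (hE s hs)) hnd hE
  omega

/-- in a `k`-uniform 2-hypertree, two distinct maximal tight stars
are edge-disjoint. -/
theorem stmt3 {V : Type*} [Fintype V] [DecidableEq V] (k : ℕ) (hk : 2 ≤ k)
    (E : Finset (Finset V)) (hH : IsLHypertree k 2 E)
    (S₁ S₂ : Finset (Finset V)) (h1 : IsMaxStar k E S₁) (h2 : IsMaxStar k E S₂)
    (hne : S₁ ≠ S₂) : Disjoint S₁ S₂ :=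
  stmt3_general k E hH S₁ S₂ h1 h2 hne
end

section
/- Star-equation: If H = (V, E) is a k-uniform 2-hypertree on n vertices, C_i denotes the number of maximal stars with exactly i edges in the star-decomposition of H, and l denotes the number of (k-1)-subsets of V not covered by any edge of H, then |E| = (1/(k-1))·C(n, k-1) − (1/(k-1))·Σ_{i=1}^{n-k+1} C_i − l/(k-1). -/
/-!
Double count the pairs `(s, e)` of an edge `e` and a `(k-1)`-subset `s ⊆ e`:
`k |E| = ∑ₛ deg s`. A `(k-1)`-set of degree at least 2 spans the maximal star of all edges
through it, and a maximal star with at least two edges is spanned by its kernel, so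
`∑ₛ (deg s - 1) = ∑_S (|S| - 1)`. In a 2-hypertree every edge lies in exactly one maximal star,
because an edge meeting two others in different `(k-1)`-sets would lie on a semicycle or on a
chain of length 3. Hence `∑_S |S| = |E|`, and as `C(n, k-1) - l` sets have positive degree,
`k |E| = |E| - #stars + C(n, k-1) - l`.
-/

variable {V : Type*} [DecidableEq V]

open Finset

theorem Finset.inter_eq_of_card_eq_pred {k : ℕ} {e f K : Finset V} (he : e.card = k)
    (hf : f.card = k) (hne : e ≠ f) (hK : K.card = k - 1) (hKe : K ⊆ e) (hKf : K ⊆ f) :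
    e ∩ f = K := by
  have hlt : (e ∩ f).card < k := by
    rw [← he]
    refine card_lt_card (ssubset_iff_subset_ne.2 ⟨inter_subset_left, fun h => hne ?_⟩)
    exact eq_of_subset_of_card_le (h ▸ inter_subset_right) (by omega)
  exact (eq_of_subset_of_card_le (subset_inter hKe hKf) (by omega)).symm

theorem windows_cons_cons_append_pair_s5 (a y x b : V) (L : List V) :
    windows (L.length + 2) (a :: y :: (L ++ [x, b])) =
      [(a :: y :: L).toFinset, (y :: (L ++ [x])).toFinset, (L ++ [x, b]).toFinset] := by
  have hlen : (a :: y :: (L ++ [x, b])).length + 1 - (L.length + 2) = 3 := by simp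
  rw [windows, hlen]
  simp [List.range_succ, List.take_append, List.take_of_length_le]

/-- The sequence is `a, y, M, x, b` with `M = K₁ ∩ K₂`, `K₁ = M + y`, `K₂ = M + x`,
`f₁ = K₁ + a` and `f₂ = K₂ + b`. -/
theorem exists_windows_eq_triple {k : ℕ} {f₁ e f₂ K₁ K₂ : Finset V} (he : e.card = k)
    (hf₁ : f₁.card = k) (hf₂ : f₂.card = k) (hK₁ : K₁.card = k - 1) (hK₂ : K₂.card = k - 1)
    (hK₁e : K₁ ⊆ e) (hK₂e : K₂ ⊆ e) (hK₁f : K₁ ⊆ f₁) (hK₂f : K₂ ⊆ f₂) (hK : K₁ ≠ K₂) :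
    ∃ w : List V, w.length = k + 2 ∧ windows k w = [f₁, e, f₂] := by
  have hincl := card_union_add_card_inter K₁ K₂
  have hMK₁ : (K₁ ∩ K₂).card < K₁.card := by
    refine card_lt_card (Finset.ssubset_iff_subset_ne.2 ⟨inter_subset_left, fun h => hK ?_⟩)
    exact eq_of_subset_of_card_le (h ▸ inter_subset_right) (by omega)
  have hunion : (K₁ ∪ K₂).card ≤ k := he ▸ card_le_card (union_subset hK₁e hK₂e)
  obtain ⟨M, hM₁, hM₂, hM⟩ : ∃ M, M ⊆ K₁ ∧ M ⊆ K₂ ∧ M.card + 2 = k :=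
    ⟨K₁ ∩ K₂, inter_subset_left, inter_subset_right, by omega⟩
  obtain ⟨y, hyM, rfl⟩ := exists_eq_insert_iff.2 ⟨hM₁, by omega⟩
  obtain ⟨x, -, rfl⟩ := exists_eq_insert_iff.2 ⟨hM₂, by omega⟩
  obtain ⟨a, -, rfl⟩ := exists_eq_insert_iff.2 ⟨hK₁f, by omega⟩
  obtain ⟨b, -, rfl⟩ := exists_eq_insert_iff.2 ⟨hK₂f, by omega⟩
  have hyx : y ∉ insert x M := fun h => (mem_insert.1 h).elim (fun h => hK (h ▸ rfl)) hyM
  have hey : insert y (insert x M) = e :=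
    eq_of_subset_of_card_le (insert_subset (hK₁e (mem_insert_self y M)) hK₂e)
      (by rw [card_insert_of_notMem hyx]; omega)
  refine ⟨a :: y :: (M.toList ++ [x, b]), by simp; omega, ?_⟩
  rw [← hM, ← length_toList, windows_cons_cons_append_pair_s5, ← hey]
  simp only [List.toFinset_cons, List.toFinset_append, toList_toFinset, List.toFinset_nil,
    insert_empty, union_singleton, union_insert, List.cons.injEq, and_true, true_and]
  exact insert_comm x b M

/-- Otherwise `f₁, e, f₂` are the windows of a semicycle or of a chain of length 3. -/
theorem inter_eq_inter_of_chainsLenLE_two {k : ℕ} {E : Finset (Finset V)}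
    (huni : ∀ e ∈ E, e.card = k) (hsf : SemicycleFree k E) (hlen : ChainsLenLE k 2 E)
    {e f₁ f₂ : Finset V} (he : e ∈ E) (hf₁ : f₁ ∈ E) (hf₂ : f₂ ∈ E) (h₁ : f₁ ≠ e)
    (h₂ : f₂ ≠ e) (h₁₂ : f₁ ≠ f₂) (hc₁ : (e ∩ f₁).card = k - 1)
    (hc₂ : (e ∩ f₂).card = k - 1) : e ∩ f₁ = e ∩ f₂ := by
  by_contra hK
  obtain ⟨w, hw, hwin⟩ := exists_windows_eq_triple (huni e he) (huni f₁ hf₁) (huni f₂ hf₂)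
    hc₁ hc₂ inter_subset_left inter_subset_left inter_subset_right inter_subset_right hK
  have hmem : ∀ g ∈ windows k w, g ∈ E := by
    simp only [hwin, List.mem_cons, List.not_mem_nil, or_false]
    rintro g (rfl | rfl | rfl) <;> assumption
  have hcard : ∀ g ∈ windows k w, g.card = k := fun g hg => huni g (hmem g hg)
  have hnd : (windows k w).Nodup := by simp [hwin, h₁, h₁₂, h₂.symm]
  by_cases hends : w.head? = w.getLast?
  · exact hsf ⟨w, ⟨by omega, hends, hcard, hnd⟩, hmem⟩
  · have := hlen w ⟨by omega, hends, hcard, hnd⟩ hmem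
    omega

section Stars

variable {k : ℕ} {E S T : Finset (Finset V)}

def edgesContaining (E : Finset (Finset V)) (s : Finset V) : Finset (Finset V) :=
  E.filter (s ⊆ ·)

open Classical in
noncomputable def maxStars (k : ℕ) (E : Finset (Finset V)) : Finset (Finset (Finset V)) :=
  E.powerset.filter (IsMaxStar k E)

omit [DecidableEq V] in
theorem mem_maxStars : S ∈ maxStars k E ↔ IsMaxStar k E S := by
  simp only [maxStars, mem_filter, mem_powerset, and_iff_right_iff_imp]
  exact fun hS => hS.1.1

theorem isStarSub_edgesContaining {s : Finset V} (hs : s.card = k - 1)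
    (hne : (edgesContaining E s).Nonempty) : IsStarSub k E (edgesContaining E s) :=
  ⟨filter_subset _ _, hne, s, hs, fun _ hg => (mem_filter.1 hg).2⟩

omit [DecidableEq V] in
theorem isStarSub_singleton (huni : ∀ e ∈ E, e.card = k) {e : Finset V} (he : e ∈ E) :
    IsStarSub k E {e} := by
  obtain ⟨K, hKe, hK⟩ := exists_subset_card_eq (s := e) (n := k - 1) (by rw [huni e he]; omega)
  exact ⟨singleton_subset_iff.2 he, singleton_nonempty e, K, hK,
    fun g hg => mem_singleton.1 hg ▸ hKe⟩

theorem IsStarSub.exists_isMaxStar_superset (hT : IsStarSub k E T) :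
    ∃ S, IsMaxStar k E S ∧ T ⊆ S := by
  classical
  obtain ⟨S, hTS, hS⟩ := exists_le_maximal (E.powerset.filter fun S => IsStarSub k E S ∧ T ⊆ S)
    (mem_filter.2 ⟨mem_powerset.2 hT.1, hT, subset_rfl⟩)
  obtain ⟨-, hSstar, -⟩ := mem_filter.1 hS.1
  refine ⟨S, ⟨hSstar, fun U hU hSU => hS.eq_of_le ?_ hSU⟩, hTS⟩
  exact mem_filter.2 ⟨mem_powerset.2 hU.1, hU, hTS.trans hSU⟩

theorem IsStarSub.inter_isKernel (huni : ∀ e ∈ E, e.card = k) (hS : IsStarSub k E S)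
    {e f : Finset V} (he : e ∈ S) (hf : f ∈ S) (hne : e ≠ f) :
    (e ∩ f).card = k - 1 ∧ ∀ g ∈ S, e ∩ f ⊆ g := by
  obtain ⟨hSE, -, K, hK, hKS⟩ := hS
  rw [inter_eq_of_card_eq_pred (huni e (hSE he)) (huni f (hSE hf)) hne hK (hKS e he) (hKS f hf)]
  exact ⟨hK, hKS⟩

theorem IsStarSub.card_le_sub [Fintype V] (huni : ∀ e ∈ E, e.card = k) (hk : 1 ≤ k)
    (hS : IsStarSub k E S) : S.card ≤ Fintype.card V - (k - 1) := by
  obtain ⟨hSE, -, K, hK, hKS⟩ := hS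
  have hsub : S ⊆ (univ \ K).image (insert · K) := by
    intro g hg
    obtain ⟨a, haK, rfl⟩ := exists_eq_insert_iff.2 ⟨hKS g hg, by rw [huni g (hSE hg)]; omega⟩
    exact mem_image.2 ⟨a, mem_sdiff.2 ⟨mem_univ a, haK⟩, rfl⟩
  calc S.card ≤ ((univ \ K).image (insert · K)).card := card_le_card hsub
    _ ≤ (univ \ K).card := card_image_le
    _ = Fintype.card V - (k - 1) := by rw [card_sdiff_of_subset (subset_univ K), card_univ, hK]

theorem IsMaxStar.eq_edgesContaining_inter (huni : ∀ e ∈ E, e.card = k)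
    (hS : IsMaxStar k E S) {e f : Finset V} (he : e ∈ S) (hf : f ∈ S) (hne : e ≠ f) :
    S = edgesContaining E (e ∩ f) := by
  obtain ⟨hcard, hker⟩ := hS.1.inter_isKernel huni he hf hne
  refine hS.2 _ (isStarSub_edgesContaining hcard ⟨e, ?_⟩) fun g hg => ?_
  · exact mem_filter.2 ⟨hS.1.1 he, hker e he⟩
  · exact mem_filter.2 ⟨hS.1.1 hg, hker g hg⟩

theorem inter_eq_of_mem_edgesContaining (huni : ∀ e ∈ E, e.card = k) {s e f : Finset V}
    (hs : s.card = k - 1) (he : e ∈ edgesContaining E s) (hf : f ∈ edgesContaining E s)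
    (hne : e ≠ f) : e ∩ f = s := by
  obtain ⟨heE, hse⟩ := mem_filter.1 he
  obtain ⟨hfE, hsf⟩ := mem_filter.1 hf
  exact inter_eq_of_card_eq_pred (huni e heE) (huni f hfE) hne hs hse hsf

theorem isMaxStar_edgesContaining (huni : ∀ e ∈ E, e.card = k) {s : Finset V}
    (hs : s.card = k - 1) (h : 1 < (edgesContaining E s).card) :
    IsMaxStar k E (edgesContaining E s) := by
  refine ⟨isStarSub_edgesContaining hs (card_pos.1 (by omega)), fun T hT hsub => ?_⟩
  obtain ⟨e, he, f, hf, hne⟩ := one_lt_card.1 h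
  have hef := inter_eq_of_mem_edgesContaining huni hs he hf hne
  refine hsub.antisymm fun g hg => mem_filter.2 ⟨hT.1 hg, ?_⟩
  exact hef ▸ (hT.inter_isKernel huni (hsub he) (hsub hf) hne).2 g hg

theorem IsMaxStar.eq_of_mem_of_mem (huni : ∀ e ∈ E, e.card = k) (hsf : SemicycleFree k E)
    (hlen : ChainsLenLE k 2 E) (hS : IsMaxStar k E S) (hT : IsMaxStar k E T) {e : Finset V}
    (heS : e ∈ S) (heT : e ∈ T) : S = T := by
  by_cases hS₁ : ∀ f ∈ S, f = e
  · exact hS.2 T hT.1 fun f hf => hS₁ f hf ▸ heT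
  by_cases hT₁ : ∀ f ∈ T, f = e
  · exact (hT.2 S hS.1 fun f hf => hT₁ f hf ▸ heS).symm
  push Not at hS₁ hT₁
  obtain ⟨f₁, hf₁, h₁⟩ := hS₁
  obtain ⟨f₂, hf₂, h₂⟩ := hT₁
  rw [hS.eq_edgesContaining_inter huni heS hf₁ h₁.symm,
    hT.eq_edgesContaining_inter huni heT hf₂ h₂.symm]
  rcases eq_or_ne f₁ f₂ with rfl | h₁₂
  · rfl
  rw [inter_eq_inter_of_chainsLenLE_two huni hsf hlen (hS.1.1 heS) (hS.1.1 hf₁) (hT.1.1 hf₂)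
    h₁ h₂ h₁₂ (hS.1.inter_isKernel huni heS hf₁ h₁.symm).1
    (hT.1.inter_isKernel huni heT hf₂ h₂.symm).1]

end Stars

section Counting

variable {k : ℕ} {E : Finset (Finset V)}

theorem sum_card_maxStars (huni : ∀ e ∈ E, e.card = k) (hsf : SemicycleFree k E)
    (hlen : ChainsLenLE k 2 E) : ∑ S ∈ maxStars k E, S.card = E.card := by
  have hunique : ∀ e ∈ E, ((maxStars k E).filter (e ∈ ·)).card = 1 := by
    intro e he
    obtain ⟨S, hS, heS⟩ := (isStarSub_singleton huni he).exists_isMaxStar_superset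
    rw [singleton_subset_iff] at heS
    refine card_eq_one.2 ⟨S, eq_singleton_iff_unique_mem.2 ⟨?_, fun T hT => ?_⟩⟩
    · exact mem_filter.2 ⟨mem_maxStars.2 hS, heS⟩
    · obtain ⟨hT, heT⟩ := mem_filter.1 hT
      exact (hS.eq_of_mem_of_mem huni hsf hlen (mem_maxStars.1 hT) heS heT).symm
  rw [← mul_one E.card, ← sum_card_inter hunique]
  exact sum_congr rfl fun S hS => by rw [inter_eq_right.2 (mem_maxStars.1 hS).1.1]

/-- Only the `(k-1)`-sets of degree at least 2 contribute on the left, and these are exactly the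
kernels of the maximal stars with at least two edges. -/
theorem sum_card_edgesContaining_sub_one [Fintype V] (huni : ∀ e ∈ E, e.card = k) :
    ∑ s ∈ powersetCard (k - 1) univ, ((edgesContaining E s).card - 1) =
      ∑ S ∈ maxStars k E, (S.card - 1) := by
  refine sum_bij_ne_zero (fun s _ _ => edgesContaining E s) ?_ ?_ ?_ fun _ _ _ => rfl
  · intro s hs hdeg
    exact mem_maxStars.2 (isMaxStar_edgesContaining huni (mem_powersetCard.1 hs).2 (by omega))
  · intro s₁ hs₁ hdeg₁ s₂ hs₂ _ heq
    obtain ⟨e, he, f, hf, hne⟩ := one_lt_card.1 (by omega : 1 < (edgesContaining E s₁).card)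
    rw [← inter_eq_of_mem_edgesContaining huni (mem_powersetCard.1 hs₁).2 he hf hne,
      inter_eq_of_mem_edgesContaining huni (mem_powersetCard.1 hs₂).2 (heq ▸ he) (heq ▸ hf) hne]
  · intro S hS hcard
    obtain ⟨e, he, f, hf, hne⟩ := one_lt_card.1 (by omega : 1 < S.card)
    have hS := mem_maxStars.1 hS
    have hSeq := hS.eq_edgesContaining_inter huni he hf hne
    exact ⟨e ∩ f, mem_powersetCard.2 ⟨subset_univ _, (hS.1.inter_isKernel huni he hf hne).1⟩,
      hSeq ▸ hcard, hSeq.symm⟩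

theorem card_mul_eq_sum_card_edgesContaining [Fintype V] (huni : ∀ e ∈ E, e.card = k)
    (hk : 1 ≤ k) :
    k * E.card = ∑ s ∈ powersetCard (k - 1) univ, (edgesContaining E s).card := by
  have hdouble := sum_card_bipartiteAbove_eq_sum_card_bipartiteBelow (s := E)
    (t := powersetCard (k - 1) univ) (r := fun g s => s ⊆ g)
  have habove : ∀ g ∈ E,
      ((powersetCard (k - 1) univ).bipartiteAbove (fun g s => s ⊆ g) g).card = k := by
    intro g hg
    have : (powersetCard (k - 1) univ).filter (· ⊆ g) = g.powersetCard (k - 1) := by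
      ext s
      simp [and_comm]
    rw [bipartiteAbove, this, card_powersetCard, huni g hg,
      Nat.choose_symm_of_eq_add (b := 1) (by omega), Nat.choose_one_right]
  rwa [sum_congr rfl habove, sum_const, smul_eq_mul, mul_comm] at hdouble

theorem card_mul_add_card_maxStars_add_card_uncovered [Fintype V] (huni : ∀ e ∈ E, e.card = k)
    (hsf : SemicycleFree k E) (hlen : ChainsLenLE k 2 E) (hk : 1 ≤ k) :
    k * E.card + (maxStars k E).card +
        ((powersetCard (k - 1) univ).filter fun s => ∀ e ∈ E, ¬ s ⊆ e).card =
      E.card + (Fintype.card V).choose (k - 1) := by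
  have hcovered : ∑ s ∈ powersetCard (k - 1) univ, (edgesContaining E s).card =
      ∑ s ∈ powersetCard (k - 1) univ, ((edgesContaining E s).card - 1) +
        ((powersetCard (k - 1) univ).filter fun s => ¬ ∀ e ∈ E, ¬ s ⊆ e).card := by
    rw [card_filter, ← sum_add_distrib]
    refine sum_congr rfl fun s _ => ?_
    have hcov : (∀ e ∈ E, ¬ s ⊆ e) ↔ (edgesContaining E s).card = 0 := by
      rw [card_eq_zero, edgesContaining, filter_eq_empty_iff]
    split_ifs with h <;> simp only [hcov] at h <;> omega
  have hstars : ∑ S ∈ maxStars k E, (S.card - 1) + (maxStars k E).card = E.card := by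
    rw [← sum_card_maxStars huni hsf hlen, card_eq_sum_ones, ← sum_add_distrib]
    refine sum_congr rfl fun S hS => ?_
    have := (mem_maxStars.1 hS).1.2.1.card_pos
    omega
  have hsplit := card_filter_add_card_filter_not (s := powersetCard (k - 1) (univ : Finset V))
    (fun s => ¬ ∀ e ∈ E, ¬ s ⊆ e)
  simp only [not_not, card_powersetCard, card_univ] at hsplit
  have := card_mul_eq_sum_card_edgesContaining huni hk
  have := sum_card_edgesContaining_sub_one huni (E := E)
  omega

omit [DecidableEq V] in
theorem natCard_isMaxStar_and_card_eq (i : ℕ) :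
    Nat.card {S : Finset (Finset V) // IsMaxStar k E S ∧ S.card = i} =
      ((maxStars k E).filter (·.card = i)).card :=
  Nat.subtype_card _ fun S => by rw [mem_filter, mem_maxStars]

theorem sum_card_filter_card_eq_maxStars [Fintype V] (huni : ∀ e ∈ E, e.card = k) (hk : 1 ≤ k) :
    ∑ i ∈ Icc 1 (Fintype.card V - k + 1), ((maxStars k E).filter (·.card = i)).card =
      (maxStars k E).card := by
  refine (card_eq_sum_card_fiberwise fun S hS => ?_).symm
  have hS := (mem_maxStars.1 hS).1
  have := hS.card_le_sub huni hk
  have := hS.2.1.card_pos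
  rw [mem_coe, mem_Icc]
  omega

end Counting

/-- Star-equation. -/
theorem stmt5 {V : Type*} [Fintype V] [DecidableEq V] (n k : ℕ) (hk : 2 ≤ k)
    (hn : Fintype.card V = n)
    (E : Finset (Finset V)) (hH : IsLHypertree k 2 E)
    (C : ℕ → ℕ)
    (hC : ∀ i, C i = Nat.card {S : Finset (Finset V) // IsMaxStar k E S ∧ S.card = i})
    (l : ℕ)
    (hl : l = ((Finset.powersetCard (k - 1) (Finset.univ : Finset V)).filter
      (fun s => ∀ e ∈ E, ¬ s ⊆ e)).card) :
    (E.card : ℚ) = (1 / ((k : ℚ) - 1)) * (n.choose (k - 1)) -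
      (1 / ((k : ℚ) - 1)) * (∑ i ∈ Finset.Icc 1 (n - k + 1), C i) -
      (l : ℚ) / ((k : ℚ) - 1) := by
  obtain ⟨⟨huni, -, hsf⟩, hlen⟩ := hH
  subst hn
  have hstars : ∑ i ∈ Icc 1 (Fintype.card V - k + 1), C i = (maxStars k E).card := by
    simp only [hC, natCard_isMaxStar_and_card_eq]
    exact sum_card_filter_card_eq_maxStars huni (by omega)
  have hcount := congrArg (Nat.cast : ℕ → ℚ)
    (card_mul_add_card_maxStars_add_card_uncovered huni hsf hlen (by omega))
  rw [← hl] at hcount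
  push_cast at hcount
  have hk₁ : (k : ℚ) - 1 ≠ 0 := by
    have : (2 : ℚ) ≤ k := by exact_mod_cast hk
    linarith
  rw [hstars]
  field_simp
  linarith
end

section
/- Extension lemma: Let G = (V, F) be an S(k-2, k-1, n) Steiner system and H = (V, E) a chain-connected k-uniform extension of G (every edge of H contains an edge of G) that contains no mutually extended edges. Then H is a k-uniform 2-hypertree. -/
/-!
Two edges `e, e'` of `E` sharing `k - 1` vertices contain a common edge of the Steiner system:
otherwise the edges `f ⊆ e`, `f' ⊆ e'` of `F` they extend would be mutually extended. Since a
`k`-set contains at most one edge of `F`, every edge of `E` meets all its neighbours in one and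
the same `(k - 1)`-set. Three consecutive edges of a chain or semicycle would, however, meet their
middle edge in two different `(k - 1)`-sets; so chains have length at most `2`, and semicycles of
length `1` or `2` are excluded directly by counting.
-/

variable {V : Type*} [DecidableEq V]

open Finset

def IsSteinerSystem (t r : ℕ) (F : Finset (Finset V)) : Prop :=
  (∀ f ∈ F, #f = r) ∧ ∀ s : Finset V, #s = t → ∃! f, f ∈ F ∧ s ⊆ f

def MutuallyExtended (k : ℕ) (E : Finset (Finset V)) (f₁ f₂ : Finset V) : Prop :=
  #(f₁ ∩ f₂) = k - 3 ∧ ∃ v₁ ∈ f₁, ∃ v₂ ∈ f₂, insert v₂ f₁ ∈ E ∧ insert v₁ f₂ ∈ E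

/-- Each edge of `E` lies in at most one star with two or more edges: all the edges sharing
`k - 1` vertices with it share the same `k - 1` vertices. -/
def UniqueKernel (k : ℕ) (E : Finset (Finset V)) : Prop :=
  ∀ e₀ ∈ E, ∀ e₁ ∈ E, ∀ e₂ ∈ E, #(e₀ ∩ e₁) = k - 1 → #(e₁ ∩ e₂) = k - 1 →
    e₀ ∩ e₁ = e₁ ∩ e₂

theorem Finset.card_inter_lt_of_ne {α : Type*} [DecidableEq α] {s t : Finset α} {k : ℕ}
    (hs : #s = k) (ht : #t = k) (hne : s ≠ t) : #(s ∩ t) < k := by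
  by_contra! h
  have hst : s ∩ t = s := eq_of_subset_of_card_le inter_subset_left (by omega)
  exact hne (eq_of_subset_of_card_le (hst ▸ inter_subset_right) (by omega))

theorem Finset.mem_of_card_le_card_insert_inter {α : Type*} [DecidableEq α] {s u : Finset α}
    {x : α} (hsu : ¬ s ⊆ u) (hcard : #s ≤ #(insert x s ∩ u)) : x ∈ u := by
  by_contra hx
  have hsub : insert x s ∩ u ⊆ s := fun z hz => by
    obtain ⟨hzs, hzu⟩ := mem_inter.1 hz
    exact (mem_insert.1 hzs).resolve_left (by rintro rfl; exact hx hzu)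
  exact hsu (eq_of_subset_of_card_le hsub hcard ▸ inter_subset_right)

theorem Finset.eq_inter_of_subset_inter {α : Type*} [DecidableEq α] {s t K : Finset α} {k : ℕ}
    (hs : #s = k) (ht : #t = k) (hne : s ≠ t) (hK : K ⊆ s ∩ t) (hKc : #K = k - 1) :
    K = s ∩ t :=
  eq_of_subset_of_card_le hK (by have := card_inter_lt_of_ne hs ht hne; omega)

theorem List.Nodup.head?_ne_getLast? {α : Type*} {l : List α} (hl : l.Nodup)
    (hlen : 2 ≤ l.length) : l.head? ≠ l.getLast? := by
  obtain _ | ⟨a, t⟩ := l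
  · simp at hlen
  have ht : t ≠ [] := by rintro rfl; simp at hlen
  rw [List.head?_cons, List.getLast?_eq_some_getLast (List.cons_ne_nil a t), List.getLast_cons ht,
    Ne, Option.some_inj]
  rintro rfl
  exact (List.nodup_cons.1 hl).1 (List.getLast_mem ht)

namespace IsSteinerSystem

variable {t r : ℕ} {F : Finset (Finset V)} {f f' : Finset V}

theorem eq_of_le_card_inter (hF : IsSteinerSystem t r F) (hf : f ∈ F) (hf' : f' ∈ F)
    (h : t ≤ #(f ∩ f')) : f = f' := by
  obtain ⟨s, hs, hst⟩ := exists_subset_card_eq h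
  exact (hF.2 s hst).unique ⟨hf, hs.trans inter_subset_left⟩ ⟨hf', hs.trans inter_subset_right⟩

theorem eq_of_subset {k : ℕ} (hF : IsSteinerSystem (k - 2) (k - 1) F) {e : Finset V}
    (he : #e = k) (hf : f ∈ F) (hf' : f' ∈ F) (hfe : f ⊆ e) (hf'e : f' ⊆ e) : f = f' := by
  refine hF.eq_of_le_card_inter hf hf' ?_
  have := card_union_add_card_inter f f'
  have := card_le_card (union_subset hfe hf'e)
  have := hF.1 f hf
  have := hF.1 f' hf'
  omega

end IsSteinerSystem

section Extension

variable {k : ℕ} {F E : Finset (Finset V)}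

theorem mutuallyExtended_of_not_subset (hF : IsSteinerSystem (k - 2) (k - 1) F)
    {e e' f f' : Finset V} (he : e ∈ E) (he' : e' ∈ E) (hce : #e = k) (hce' : #e' = k)
    (hcard : #(e ∩ e') = k - 1) (hf : f ∈ F) (hf' : f' ∈ F) (hfe : f ⊆ e) (hf'e' : f' ⊆ e')
    (hfe' : ¬ f ⊆ e') (hf'e : ¬ f' ⊆ e) : MutuallyExtended k E f f' := by
  have hcf := hF.1 f hf
  have hcf' := hF.1 f' hf'
  have hk : 2 ≤ k := by
    obtain ⟨z, hz, -⟩ := not_subset.1 hfe'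
    have := card_pos.2 ⟨z, hz⟩
    omega
  obtain ⟨x, hxf, rfl⟩ : ∃ x ∉ f, insert x f = e := exists_eq_insert_iff.2 ⟨hfe, by omega⟩
  obtain ⟨y, hyf', rfl⟩ : ∃ y ∉ f', insert y f' = e' := exists_eq_insert_iff.2 ⟨hf'e', by omega⟩
  have hxe' : x ∈ insert y f' := mem_of_card_le_card_insert_inter hfe' (by omega)
  have hye : y ∈ insert x f :=
    mem_of_card_le_card_insert_inter hf'e (by rw [inter_comm]; omega)
  -- if `e` and `e'` arose by adding the same vertex, `f` and `f'` would share `k - 2` vertices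
  have hxy : x ≠ y := by
    rintro rfl
    have hff' : f = f' := hF.eq_of_le_card_inter hf hf' <| by
      have := card_insert_le x (f ∩ f')
      rw [insert_inter_distrib] at this
      omega
    exact hfe' (hff' ▸ subset_insert x f')
  have hxf' : x ∈ f' := (mem_insert.1 hxe').resolve_left hxy
  have hyf : y ∈ f := (mem_insert.1 hye).resolve_left hxy.symm
  have hinter : insert x f ∩ insert y f' = insert x (insert y (f ∩ f')) := by
    ext z
    simp only [mem_inter, mem_insert]
    grind
  refine ⟨?_, y, hyf, x, hxf', he, he'⟩
  rw [hinter, card_insert_of_notMem (by simp [hxy, hxf]), card_insert_of_notMem (by simp [hyf'])]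
    at hcard
  omega

theorem exists_subset_inter_of_card_inter (hF : IsSteinerSystem (k - 2) (k - 1) F)
    (hEu : ∀ e ∈ E, #e = k) (hext : ∀ e ∈ E, ∃ f ∈ F, f ⊆ e)
    (hme : ∀ f₁ ∈ F, ∀ f₂ ∈ F, ¬ MutuallyExtended k E f₁ f₂)
    {e e' : Finset V} (he : e ∈ E) (he' : e' ∈ E) (hcard : #(e ∩ e') = k - 1) :
    ∃ f ∈ F, f ⊆ e ∩ e' := by
  obtain ⟨f, hf, hfe⟩ := hext e he
  obtain ⟨f', hf', hf'e'⟩ := hext e' he'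
  by_cases hfe' : f ⊆ e'
  · exact ⟨f, hf, subset_inter hfe hfe'⟩
  by_cases hf'e : f' ⊆ e
  · exact ⟨f', hf', subset_inter hf'e hf'e'⟩
  exact (hme f hf f' hf' (mutuallyExtended_of_not_subset hF he he' (hEu e he) (hEu e' he') hcard
    hf hf' hfe hf'e' hfe' hf'e)).elim

theorem uniqueKernel_of_extension (hF : IsSteinerSystem (k - 2) (k - 1) F)
    (hEu : ∀ e ∈ E, #e = k) (hext : ∀ e ∈ E, ∃ f ∈ F, f ⊆ e)
    (hme : ∀ f₁ ∈ F, ∀ f₂ ∈ F, ¬ MutuallyExtended k E f₁ f₂) : UniqueKernel k E := by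
  have inter_mem : ∀ e ∈ E, ∀ e' ∈ E, #(e ∩ e') = k - 1 → e ∩ e' ∈ F := by
    intro e he e' he' hcard
    obtain ⟨f, hf, hfee'⟩ := exists_subset_inter_of_card_inter hF hEu hext hme he he' hcard
    rwa [← eq_of_subset_of_card_le hfee' (by rw [hcard, hF.1 f hf])]
  intro e₀ he₀ e₁ he₁ e₂ he₂ h₀₁ h₁₂
  exact hF.eq_of_subset (hEu e₁ he₁) (inter_mem e₀ he₀ e₁ he₁ h₀₁) (inter_mem e₁ he₁ e₂ he₂ h₁₂)
    inter_subset_right inter_subset_left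

theorem UniqueKernel.eq_of_subset_inter (hU : UniqueKernel k E) {e₀ e₁ e₂ K₁ K₂ : Finset V}
    (he₀ : e₀ ∈ E) (he₁ : e₁ ∈ E) (he₂ : e₂ ∈ E) (hc₀ : #e₀ = k) (hc₁ : #e₁ = k) (hc₂ : #e₂ = k)
    (h₀₁ : e₀ ≠ e₁) (h₁₂ : e₁ ≠ e₂) (hK₁ : K₁ ⊆ e₀ ∩ e₁) (hK₂ : K₂ ⊆ e₁ ∩ e₂)
    (hcK₁ : #K₁ = k - 1) (hcK₂ : #K₂ = k - 1) : K₁ = K₂ := by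
  have h₁ := eq_inter_of_subset_inter hc₀ hc₁ h₀₁ hK₁ hcK₁
  have h₂ := eq_inter_of_subset_inter hc₁ hc₂ h₁₂ hK₂ hcK₂
  rw [h₁, h₂]
  exact hU _ he₀ _ he₁ _ he₂ (h₁ ▸ hcK₁) (h₂ ▸ hcK₂)

end Extension

section Windows

variable {k : ℕ} {E : Finset (Finset V)}

theorem take_toFinset_mem_windows {w : List V} {i : ℕ} (hi : i + k ≤ w.length) :
    ((w.drop i).take k).toFinset ∈ windows k w :=
  List.mem_map_of_mem (List.mem_range.2 (by omega))

theorem eq_of_take_toFinset_eq {w : List V} (hnd : (windows k w).Nodup) {i j : ℕ}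
    (hi : i + k ≤ w.length) (hj : j + k ≤ w.length)
    (h : ((w.drop i).take k).toFinset = ((w.drop j).take k).toFinset) : i = j :=
  List.inj_on_of_nodup_map hnd (List.mem_range.2 (by omega)) (List.mem_range.2 (by omega)) h

theorem IsSemicycleSeq.add_two_le_length (hk : 2 ≤ k) {w : List V} (hw : IsSemicycleSeq k w) :
    k + 2 ≤ w.length := by
  obtain ⟨hkw, hhead, hcard, hnd⟩ := hw
  by_contra! hlen
  obtain hlen | hlen : w.length = k ∨ w.length = k + 1 := by omega
  · have hw : w.toFinset ∈ windows k w := by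
      simpa [List.take_of_length_le hlen.le] using
        take_toFinset_mem_windows (k := k) (w := w) (i := 0) (by omega)
    have hnodup : w.Nodup :=
      Multiset.toFinset_card_eq_card_iff_nodup.1 ((hcard _ hw).trans hlen.symm)
    exact hnodup.head?_ne_getLast? (by omega) hhead
  · obtain ⟨m, rfl⟩ : ∃ m, k = m + 1 := ⟨k - 1, by omega⟩
    obtain _ | ⟨a, t⟩ := w
    · simp at hlen
    have ht : t.length = m + 1 := by simpa using hlen
    have ht' : t ≠ [] := List.ne_nil_of_length_pos (by omega)
    -- the first vertex is the last one, so the first window lies inside the second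
    have hat : a ∈ t := by
      rw [List.head?_cons, List.getLast?_eq_some_getLast (List.cons_ne_nil a t),
        List.getLast_cons ht', Option.some_inj] at hhead
      exact hhead ▸ List.getLast_mem ht'
    have h₀ := take_toFinset_mem_windows (k := m + 1) (w := a :: t) (i := 0) (by simp; omega)
    have h₁ := take_toFinset_mem_windows (k := m + 1) (w := a :: t) (i := 1) (by simp; omega)
    have hsub : ((a :: t).drop 0).take (m + 1) ⊆ ((a :: t).drop 1).take (m + 1) := by
      simp only [List.drop_zero, List.take_succ_cons, List.drop_succ_cons,
        List.take_of_length_le ht.le]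
      exact List.cons_subset.2 ⟨hat, List.take_subset _ _⟩
    have := eq_of_take_toFinset_eq hnd (i := 0) (j := 1) (by simp; omega) (by simp; omega)
      (eq_of_subset_of_card_le (Multiset.toFinset_subset.2 hsub)
        (by rw [hcard _ h₀, hcard _ h₁]))
    omega

/-- Three consecutive windows `{w₀,…,w_{k-1}}`, `{w₁,…,w_k}`, `{w₂,…,w_{k+1}}` would meet in the
distinct kernels `{w₁,…,w_{k-1}}` and `{w₂,…,w_k}`. -/
theorem UniqueKernel.false_of_add_two_le_length (hU : UniqueKernel k E) (hk : 2 ≤ k)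
    {w : List V} (hlen : k + 2 ≤ w.length) (hcard : ∀ e ∈ windows k w, #e = k)
    (hnd : (windows k w).Nodup) (hE : ∀ e ∈ windows k w, e ∈ E) : False := by
  obtain ⟨m, rfl⟩ : ∃ m, k = m + 2 := ⟨k - 2, by omega⟩
  obtain _ | ⟨a, _ | ⟨b, t⟩⟩ := w
  · simp at hlen
  · simp at hlen
  have hlen' : ∀ i ≤ 2, i + (m + 2) ≤ (a :: b :: t).length := fun i hi => by
    simp only [List.length_cons] at hlen ⊢; omega
  set K₁ := insert b (t.take m).toFinset
  set K₂ := (t.take (m + 1)).toFinset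
  have he₀ : (((a :: b :: t).drop 0).take (m + 2)).toFinset = insert a K₁ := by simp [K₁]
  have he₁ : (((a :: b :: t).drop 1).take (m + 2)).toFinset = insert b K₂ := by simp [K₂]
  have he₂ : (((a :: b :: t).drop 2).take (m + 2)).toFinset = (t.take (m + 2)).toFinset := rfl
  have h₀ := he₀ ▸ take_toFinset_mem_windows (hlen' 0 (by norm_num))
  have h₁ := he₁ ▸ take_toFinset_mem_windows (hlen' 1 (by norm_num))
  have h₂ := he₂ ▸ take_toFinset_mem_windows (hlen' 2 (by norm_num))
  have hne₀₁ : insert a K₁ ≠ insert b K₂ := he₀ ▸ he₁ ▸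
    mt (eq_of_take_toFinset_eq hnd (hlen' 0 (by norm_num)) (hlen' 1 (by norm_num))) (by norm_num)
  have hne₁₂ : insert b K₂ ≠ (t.take (m + 2)).toFinset := he₁ ▸ he₂ ▸
    mt (eq_of_take_toFinset_eq hnd (hlen' 1 (by norm_num)) (hlen' 2 (by norm_num))) (by norm_num)
  have hcK₁ : #K₁ = m + 1 := by
    have : #K₁ ≤ #(t.take m).toFinset + 1 := card_insert_le _ _
    have := (t.take m).toFinset_card_le
    have := List.length_take_le m t
    have := card_insert_le a K₁
    have := hcard _ h₀
    omega
  have hcK₂ : #K₂ = m + 1 := by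
    have : #K₂ ≤ (t.take (m + 1)).length := List.toFinset_card_le _
    have := List.length_take_le (m + 1) t
    have := card_insert_le b K₂
    have := hcard _ h₁
    omega
  have hbK₂ : b ∉ K₂ := fun hb => by
    have := hcard _ h₁
    rw [insert_eq_of_mem hb] at this
    omega
  have hKK := hU.eq_of_subset_inter (hE _ h₀) (hE _ h₁) (hE _ h₂) (hcard _ h₀) (hcard _ h₁)
    (hcard _ h₂) hne₀₁ hne₁₂
    (subset_inter (subset_insert a K₁) (insert_subset_insert b
      (Multiset.toFinset_subset.2 (List.take_subset_take_left t (by omega)))))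
    (subset_inter (subset_insert b K₂)
      (Multiset.toFinset_subset.2 (List.take_subset_take_left t (by omega)))) hcK₁ hcK₂
  exact hbK₂ (hKK ▸ mem_insert_self b _)

theorem UniqueKernel.semicycleFree (hU : UniqueKernel k E) (hk : 2 ≤ k) : SemicycleFree k E :=
  fun ⟨_, hw, hE⟩ => hU.false_of_add_two_le_length hk (hw.add_two_le_length hk) hw.2.2.1
    hw.2.2.2 hE

theorem UniqueKernel.chainsLenLE_two (hU : UniqueKernel k E) (hk : 2 ≤ k) : ChainsLenLE k 2 E :=
  fun _ hw hE => by
    by_contra! hlen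
    exact hU.false_of_add_two_le_length hk (by omega) hw.2.2.1 hw.2.2.2 hE

end Windows

theorem stmt8_general {V : Type*} [Fintype V] [DecidableEq V] (k : ℕ) (hk : 3 ≤ k)
    (F : Finset (Finset V)) (hFu : ∀ f ∈ F, f.card = k - 1)
    (hFst : ∀ s : Finset V, s.card = k - 2 → ∃! f, f ∈ F ∧ s ⊆ f)
    (E : Finset (Finset V)) (hEu : ∀ e ∈ E, e.card = k)
    (hext : ∀ e ∈ E, ∃ f ∈ F, f ⊆ e)
    (hcc : ChainConn k E)
    (hnme : ¬ ∃ f₁ ∈ F, ∃ f₂ ∈ F, (f₁ ∩ f₂).card = k - 3 ∧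
      ∃ v₁ ∈ f₁, ∃ v₂ ∈ f₂, insert v₂ f₁ ∈ E ∧ insert v₁ f₂ ∈ E) :
    IsLHypertree k 2 E := by
  have hU : UniqueKernel k E := uniqueKernel_of_extension ⟨hFu, hFst⟩ hEu hext
    fun f₁ hf₁ f₂ hf₂ h => hnme ⟨f₁, hf₁, f₂, hf₂, h⟩
  exact ⟨⟨hEu, hcc, hU.semicycleFree (by omega)⟩, hU.chainsLenLE_two (by omega)⟩

/-- Extension lemma: a chain-connected extension of an
`S(k-2, k-1, n)` Steiner system without mutually extended edges is a
`k`-uniform 2-hypertree. -/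
theorem stmt8 {V : Type*} [Fintype V] [DecidableEq V] (n k : ℕ) (hk : 3 ≤ k)
    (hn : Fintype.card V = n)
    (F : Finset (Finset V)) (hFu : ∀ f ∈ F, f.card = k - 1)
    (hFst : ∀ s : Finset V, s.card = k - 2 → ∃! f, f ∈ F ∧ s ⊆ f)
    (E : Finset (Finset V)) (hEu : ∀ e ∈ E, e.card = k)
    (hext : ∀ e ∈ E, ∃ f ∈ F, f ⊆ e)
    (hcc : ChainConn k E)
    (hnme : ¬ ∃ f₁ ∈ F, ∃ f₂ ∈ F, (f₁ ∩ f₂).card = k - 3 ∧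
      ∃ v₁ ∈ f₁, ∃ v₂ ∈ f₂, insert v₂ f₁ ∈ E ∧ insert v₁ f₂ ∈ E) :
    IsLHypertree k 2 E :=
  stmt8_general k hk F hFu hFst E hEu hext hcc hnme
end

section
/- If F = (V, E) is a k-uniform edge-minimal l-hypertree on n vertices, then |E| ≤ l·n(n−1)/2. -/
variable {V : Type*} [DecidableEq V]

/-- a `k`-uniform edge-minimal `l`-hypertree on `n` vertices has
at most `l·n(n-1)/2` edges. -/
theorem stmt13 {V : Type*} [Fintype V] [DecidableEq V] (n k l : ℕ)
    (hn : Fintype.card V = n)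
    (E : Finset (Finset V)) (hH : IsLHypertree k l E) (hmin : EdgeMinimal k E) :
    E.card ≤ l * (n * (n - 1) / 2) := by
  classical
  obtain ⟨⟨hunif, hconn, hfree⟩, hlen⟩ := hH
  -- choose a chain for each pair of distinct vertices
  have hWex : ∀ u v : V, u ≠ v → ∃ w : List V, IsChainSeq k w ∧
      (∀ e ∈ windows k w, e ∈ E) ∧ u ∈ w ∧ v ∈ w := fun u v h =>
    hconn u (Finset.mem_univ u) v (Finset.mem_univ v) h
  choose W hW1 hW2 hW3 hW4 using hWex
  -- choose a separated pair for each edge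
  have hPex : ∀ e ∈ E, ∃ u v : V, u ≠ v ∧ ∀ w : List V, IsChainSeq k w →
      (∀ f ∈ windows k w, f ∈ E.erase e) → ¬(u ∈ w ∧ v ∈ w) := by
    intro e he
    have h := hmin e he
    simp only [ChainConn, ChainConnOn, Finset.mem_univ, true_implies] at h
    push_neg at h
    obtain ⟨u, v, huv, h⟩ := h
    refine ⟨u, v, huv, fun w hw hE hm => ?_⟩
    have := h w hw hE hm.1
    exact this hm.2
  choose u v huv hdisc using hPex
  set f : {e // e ∈ E} → Finset V := fun e => {u e.1 e.2, v e.1 e.2} with hf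
  have hmaps : ∀ e ∈ E.attach, f e ∈ Finset.univ.powersetCard 2 := by
    intro e _
    simp only [Finset.mem_powersetCard]
    exact ⟨Finset.subset_univ _, Finset.card_pair (huv e.1 e.2)⟩
  have hfib : ∀ p ∈ Finset.univ.powersetCard 2,
      (E.attach.filter fun e => f e = p).card ≤ l := by
    intro p hp
    rcases Finset.eq_empty_or_nonempty (E.attach.filter fun e => f e = p) with h0 | ⟨e0, he0⟩
    · simp [h0]
    have hpc : p.card = 2 := by
      simp only [Finset.mem_filter] at he0
      rw [← he0.2, hf]
      exact Finset.card_pair (huv e0.1 e0.2)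
    obtain ⟨a, b, hab, rfl⟩ := Finset.card_eq_two.mp hpc
    set w := W a b hab with hw
    have hsub : ∀ e ∈ E.attach.filter (fun e => f e = ({a, b} : Finset V)),
        (e : Finset V) ∈ (windows k w).toFinset := by
      intro e he
      simp only [Finset.mem_filter] at he
      rw [List.mem_toFinset]
      by_contra hnot
      have huw : u e.1 e.2 ∈ w ∧ v e.1 e.2 ∈ w := by
        have hu : u e.1 e.2 ∈ ({a, b} : Finset V) := by
          rw [← he.2]; simp [hf]
        have hv : v e.1 e.2 ∈ ({a, b} : Finset V) := by
          rw [← he.2]; simp [hf]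
        simp only [Finset.mem_insert, Finset.mem_singleton] at hu hv
        constructor
        · rcases hu with h | h <;> rw [h]
          exacts [hW3 a b hab, hW4 a b hab]
        · rcases hv with h | h <;> rw [h]
          exacts [hW3 a b hab, hW4 a b hab]
      refine hdisc e.1 e.2 w (hW1 a b hab) ?_ huw
      intro g hg
      refine Finset.mem_erase.mpr ⟨?_, hW2 a b hab g hg⟩
      rintro rfl
      exact hnot hg
    calc (E.attach.filter fun e => f e = ({a, b} : Finset V)).card
        ≤ (windows k w).toFinset.card :=
          Finset.card_le_card_of_injOn (fun e => (e : Finset V)) hsub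
            (fun x _ y _ h => Subtype.ext h)
      _ ≤ (windows k w).length := List.toFinset_card_le _
      _ = w.length + 1 - k := by simp [windows]
      _ ≤ l := hlen w (hW1 a b hab) (hW2 a b hab)
  have hcard := Finset.card_le_mul_card_image_of_maps_to hmaps l hfib
  rw [Finset.card_attach] at hcard
  refine hcard.trans ?_
  rw [Finset.card_powersetCard, Finset.card_univ, hn, Nat.choose_two_right]
end
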